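/- Call a pair of domains (d_2, d_1) an elementary wall (at position ≡ 0 mod 4) if, writing d_1 = (a,b), d_2 is one of (a−1,b), (a+1,b), (a+1,b−1), (a−1,b+1), or d_1 = (0,b) and d_2 = (0,b+1), or d_1 = (m−n,b) and d_2 = (m−n,b−1). Then for any two domains (a_2,b_2) ≠ (a_1,b_1) there exists a unique finite sequence of domains (a_2,b_2) = d_K, d_{K−1}, …, d_0 = (a_1,b_1) such that every consecutive pair (d_{i+1}, d_i) is an elementary wall and, reading from left to right, the walls occur in the order: first walls of type (a+1,b)(a,b) or all of type (a−1,b)(a,b) (a single sign), then walls of a single boundary type ((0,b+1)(0,b) or (m−n,b−1)(m−n,b)), then walls of type (a+1,b−1)(a,b) or all of type (a−1,b+1)(a,b) (a single sign). Explicitly: if b_2 − b_1 > a_1, the walls are a_2 of type (a+1,b)(a,b), then b_2−b_1−a_1 of type (0,b+1)(0,b), then a_1 of type (a−1,b+1)(a,b); if a_2+b_2 ≥ a_1+b_1 ≥ b_2, they are a_2+b_2−a_1−b_1 of type (a+1,b)(a,b) followed by |b_2−b_1| walls of type (a−1,b+1)(a,b) if b_2 ≥ b_1 and of type (a+1,b−1)(a,b)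 if b_2 ≤ b_1; if m−n+b_2 ≥ a_1+b_1 ≥ a_2+b_2, they are a_1+b_1−a_2−b_2 of type (a−1,b)(a,b) followed by |b_2−b_1| walls of type (a−1,b+1)(a,b) if b_2 ≥ b_1 and of type (a+1,b−1)(a,b) if b_2 ≤ b_1; if b_1 − b_2 > m−n−a_1, they are m−n−a_2 of type (a−1,b)(a,b), then a_1+b_1−b_2−(m−n) of type (m−n,b−1)(m−n,b), then m−n−a_1 of type (a+1,b−1)(a,b). -/

import Mathlib

/-!
A normally ordered word is described by three signed block lengths `s`, `u`, `c`; starting from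
`d1 = (a, b)` it passes through the corner `(a - s, b + s)` and ends at `(a - s + c, b + s + u)`.
Since the domains form a box, the word is valid exactly when the corner is a domain and, if
boundary walls occur, lies on the matching side `a = 0` or `a = m - n`. The endpoint fixes
`c - s` and `s + u`, and the side condition then pins down `s`: this gives uniqueness, and the
four cases of the explicit formula are the possible positions of the corner.
-/

namespace Stmt14

/-- `(a,b)` is a domain. -/
def IsDomain (m n : ℤ) (d : ℤ × ℤ) : Prop :=
  0 ≤ d.1 ∧ d.1 ≤ m - n ∧ 0 ≤ d.2 ∧ d.2 ≤ n

/-- The six types of elementary walls (at positions `≡ 0 (mod 4)`), named by how the left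
domain `d₂` is obtained from the right domain `d₁ = (a,b)`:
`cm : (a-1,b)`, `cp : (a+1,b)`, `bp : (0,b+1)` (only at `a = 0`),
`tm : (m-n,b-1)` (only at `a = m-n`), `spm : (a+1,b-1)`, `smp : (a-1,b+1)`. -/
inductive WStep where
  | cm | cp | bp | tm | spm | smp
deriving DecidableEq

/-- The left domain of the elementary wall of type `w` whose right domain is `d`. -/
def applyW (d : ℤ × ℤ) : WStep → ℤ × ℤ
  | .cm => (d.1 - 1, d.2)
  | .cp => (d.1 + 1, d.2)
  | .bp => (d.1, d.2 + 1)
  | .tm => (d.1, d.2 - 1)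
  | .spm => (d.1 + 1, d.2 - 1)
  | .smp => (d.1 - 1, d.2 + 1)

/-- The result of applying a sequence of elementary walls, innermost (rightmost) first. -/
def runW (d : ℤ × ℤ) (ws : List WStep) : ℤ × ℤ := ws.foldl applyW d

/-- All intermediate domains are genuine domains and the boundary walls `bp`, `tm` only
occur at the appropriate boundary. -/
def ValidFrom (m n : ℤ) : ℤ × ℤ → List WStep → Prop
  | _, [] => True
  | d, w :: ws =>
      (w = .bp → d.1 = 0) ∧ (w = .tm → d.1 = m - n) ∧
      IsDomain m n (applyW d w) ∧ ValidFrom m n (applyW d w) ws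

/-- `ws` is a normally ordered decomposition of the wall `(d₂, d₁)` into elementary walls:
read from left to right the walls are first `C`-type walls of a single sign, then boundary
walls of a single type, then `∗`-type walls of a single sign (so in application order,
starting from `d₁`, the `∗`-walls come first and the `C`-walls last). -/
def NormalDecomp (m n : ℤ) (d2 d1 : ℤ × ℤ) (ws : List WStep) : Prop :=
  (∃ (t u v : ℕ) (sT bT cT : WStep),
    (sT = .spm ∨ sT = .smp) ∧ (bT = .bp ∨ bT = .tm) ∧ (cT = .cm ∨ cT = .cp) ∧
    ws = List.replicate t sT ++ List.replicate u bT ++ List.replicate v cT) ∧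
  ValidFrom m n d1 ws ∧ runW d1 ws = d2

/-- The explicit normally ordered decomposition, by the four cases. -/
def explicitWS (m n : ℤ) (d2 d1 : ℤ × ℤ) : List WStep :=
  if d1.1 < d2.2 - d1.2 then
    List.replicate d1.1.toNat .smp
      ++ List.replicate (d2.2 - d1.2 - d1.1).toNat .bp
      ++ List.replicate d2.1.toNat .cp
  else if d1.1 + d1.2 ≤ d2.1 + d2.2 then
    (if d1.2 ≤ d2.2 then List.replicate (d2.2 - d1.2).toNat WStep.smp
      else List.replicate (d1.2 - d2.2).toNat WStep.spm)
      ++ List.replicate (d2.1 + d2.2 - d1.1 - d1.2).toNat .cp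
  else if d1.1 + d1.2 ≤ m - n + d2.2 then
    (if d1.2 ≤ d2.2 then List.replicate (d2.2 - d1.2).toNat WStep.smp
      else List.replicate (d1.2 - d2.2).toNat WStep.spm)
      ++ List.replicate (d1.1 + d1.2 - d2.1 - d2.2).toNat .cm
  else
    List.replicate (m - n - d1.1).toNat .spm
      ++ List.replicate (d1.1 + d1.2 - d2.2 - (m - n)).toNat .tm
      ++ List.replicate (m - n - d2.1).toNat .cm

section NormalDecompositions

variable {m n : ℤ}

def WStep.disp : WStep → ℤ × ℤ
  | .cm => (-1, 0)
  | .cp => (1, 0)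
  | .bp => (0, 1)
  | .tm => (0, -1)
  | .spm => (1, -1)
  | .smp => (-1, 1)

theorem applyW_eq_add (d : ℤ × ℤ) (w : WStep) : applyW d w = d + w.disp := by
  cases w <;> ext <;> simp [applyW, WStep.disp, sub_eq_add_neg]

theorem runW_cons (d : ℤ × ℤ) (w : WStep) (ws : List WStep) :
    runW d (w :: ws) = runW (applyW d w) ws := rfl

theorem runW_append (d : ℤ × ℤ) (ws ws' : List WStep) :
    runW d (ws ++ ws') = runW (runW d ws) ws' :=
  List.foldl_append ..

theorem runW_replicate (d : ℤ × ℤ) (k : ℕ) (w : WStep) :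
    runW d (List.replicate k w) = d + (k : ℤ) • w.disp := by
  induction k generalizing d with
  | zero => simp [runW]
  | succ k ih =>
    rw [List.replicate_succ, runW_cons, ih, applyW_eq_add]
    push_cast
    module

theorem validFrom_append (d : ℤ × ℤ) (ws ws' : List WStep) :
    ValidFrom m n d (ws ++ ws') ↔ ValidFrom m n d ws ∧ ValidFrom m n (runW d ws) ws' := by
  induction ws generalizing d with
  | nil => simp [ValidFrom, runW]
  | cons w ws ih => simp only [List.cons_append, ValidFrom, ih, runW_cons, and_assoc]

/-- Since the domains form a box, a straight run of walls stays among domains as soon as its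
end does. -/
theorem validFrom_replicate_iff {d : ℤ × ℤ} (hd : IsDomain m n d) (k : ℕ) (w : WStep) :
    ValidFrom m n d (List.replicate k w) ↔
      (k ≠ 0 → (w = .bp → d.1 = 0) ∧ (w = .tm → d.1 = m - n)) ∧
        IsDomain m n (d + (k : ℤ) • w.disp) := by
  induction k generalizing d with
  | zero => simpa [ValidFrom] using hd
  | succ k ih =>
    have step_end : d + ((k + 1 : ℕ) : ℤ) • w.disp = applyW d w + (k : ℤ) • w.disp := by
      rw [applyW_eq_add]; push_cast; module
    rw [List.replicate_succ, step_end]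
    constructor
    · rintro ⟨hbp, htm, hd', hv⟩
      exact ⟨fun _ => ⟨hbp, htm⟩, ((ih hd').1 hv).2⟩
    · rintro ⟨hadm, hend⟩
      obtain ⟨hbp, htm⟩ := hadm k.succ_ne_zero
      have hd' : IsDomain m n (applyW d w) := by
        rw [applyW_eq_add] at hend ⊢
        obtain ⟨x, y⟩ := d
        cases w <;>
          simp only [IsDomain, WStep.disp, Prod.smul_mk, smul_eq_mul, Prod.mk_add_mk]
            at hd hend ⊢ <;>
          omega
      refine ⟨hbp, htm, hd', (ih hd').2 ⟨fun _ => ⟨?_, ?_⟩, hend⟩⟩ <;>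
        rintro rfl <;> simp [applyW, *]

def signedBlock (neg pos : WStep) (k : ℤ) : List WStep :=
  List.replicate k.natAbs (if 0 ≤ k then pos else neg)

@[simp]
theorem signedBlock_zero (neg pos : WStep) : signedBlock neg pos 0 = [] := rfl

@[simp]
theorem signedBlock_natCast (neg pos : WStep) (j : ℕ) :
    signedBlock neg pos j = List.replicate j pos := by
  simp [signedBlock]

@[simp]
theorem signedBlock_neg_natCast (neg pos : WStep) (j : ℕ) :
    signedBlock neg pos (-j) = List.replicate j neg := by
  rcases j.eq_zero_or_pos with rfl | hj
  · rfl
  · simp [signedBlock, hj.ne']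

theorem signedBlock_of_nonneg (neg pos : WStep) {k : ℤ} (hk : 0 ≤ k) :
    signedBlock neg pos k = List.replicate k.toNat pos := by
  rw [← signedBlock_natCast neg pos, Int.toNat_of_nonneg hk]

theorem signedBlock_of_neg (neg pos : WStep) {k : ℤ} (hk : k < 0) :
    signedBlock neg pos k = List.replicate (-k).toNat neg := by
  rw [← signedBlock_neg_natCast neg pos, Int.toNat_of_nonneg (by omega), neg_neg]

theorem exists_signedBlock_eq_replicate {neg pos w : WStep} (hw : w = neg ∨ w = pos) (t : ℕ) :
    ∃ k, List.replicate t w = signedBlock neg pos k := by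
  rcases hw with rfl | rfl
  · exact ⟨-t, (signedBlock_neg_natCast _ _ t).symm⟩
  · exact ⟨t, (signedBlock_natCast _ _ t).symm⟩

theorem runW_signedBlock {neg pos : WStep} (h : neg.disp = -pos.disp) (d : ℤ × ℤ) (k : ℤ) :
    runW d (signedBlock neg pos k) = d + k • pos.disp := by
  rcases le_or_gt 0 k with hk | hk
  · rw [signedBlock_of_nonneg _ _ hk, runW_replicate, Int.toNat_of_nonneg hk]
  · rw [signedBlock_of_neg _ _ hk, runW_replicate, Int.toNat_of_nonneg (by omega), h]
    module

theorem validFrom_signedBlock_iff {neg pos : WStep} (h : neg.disp = -pos.disp) {d : ℤ × ℤ}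
    (hd : IsDomain m n d) (k : ℤ) :
    ValidFrom m n d (signedBlock neg pos k) ↔
      (0 < k → (pos = .bp → d.1 = 0) ∧ (pos = .tm → d.1 = m - n)) ∧
      (k < 0 → (neg = .bp → d.1 = 0) ∧ (neg = .tm → d.1 = m - n)) ∧
        IsDomain m n (d + k • pos.disp) := by
  rcases le_or_gt 0 k with hk | hk
  · rw [signedBlock_of_nonneg _ _ hk, validFrom_replicate_iff hd, Int.toNat_of_nonneg hk]
    grind
  · rw [signedBlock_of_neg _ _ hk, validFrom_replicate_iff hd, Int.toNat_of_nonneg (by omega), h,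
      neg_smul_neg]
    grind

def normalWord (s u c : ℤ) : List WStep :=
  signedBlock .spm .smp s ++ signedBlock .tm .bp u ++ signedBlock .cm .cp c

/-- The `∗`-walls lead from `d1` along its antidiagonal to the corner `(d1.1 - s, d1.2 + s)`;
boundary walls can only follow, along the side `a = 0` or `a = m - n`. -/
def NormalParams (m n : ℤ) (d2 d1 : ℤ × ℤ) (s u c : ℤ) : Prop :=
  IsDomain m n (d1.1 - s, d1.2 + s) ∧ (0 < u → d1.1 - s = 0) ∧ (u < 0 → d1.1 - s = m - n) ∧
    d2 = (d1.1 - s + c, d1.2 + s + u)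

theorem runW_normalWord (d : ℤ × ℤ) (s u c : ℤ) :
    runW d (normalWord s u c) = (d.1 - s + c, d.2 + s + u) := by
  simp only [normalWord, runW_append, runW_signedBlock (neg := .spm) (pos := .smp) rfl,
    runW_signedBlock (neg := .tm) (pos := .bp) rfl, runW_signedBlock (neg := .cm) (pos := .cp) rfl]
  ext <;> simp [WStep.disp, sub_eq_add_neg]

theorem normalDecomp_normalWord_iff {d2 d1 : ℤ × ℤ} (hd2 : IsDomain m n d2)
    (hd1 : IsDomain m n d1) (s u c : ℤ) :
    NormalDecomp m n d2 d1 (normalWord s u c) ↔ NormalParams m n d2 d1 s u c := by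
  have shape : ∃ (i j k : ℕ) (sT bT cT : WStep),
      (sT = .spm ∨ sT = .smp) ∧ (bT = .bp ∨ bT = .tm) ∧ (cT = .cm ∨ cT = .cp) ∧
      normalWord s u c =
        List.replicate i sT ++ List.replicate j bT ++ List.replicate k cT :=
    ⟨_, _, _, _, _, _, by split_ifs <;> simp, by split_ifs <;> simp, by split_ifs <;> simp, rfl⟩
  have corner : d1 + s • WStep.smp.disp = (d1.1 - s, d1.2 + s) := by
    ext <;> simp [WStep.disp, sub_eq_add_neg]
  have side : (d1.1 - s, d1.2 + s) + u • WStep.bp.disp = (d1.1 - s, d1.2 + s + u) := by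
    ext <;> simp [WStep.disp]
  rw [NormalDecomp, runW_normalWord, and_iff_right shape, normalWord, validFrom_append,
    validFrom_append, runW_append, runW_signedBlock (neg := .spm) (pos := .smp) rfl,
    runW_signedBlock (neg := .tm) (pos := .bp) rfl, validFrom_signedBlock_iff rfl hd1, corner,
    side]
  constructor
  · rintro ⟨⟨⟨⟨-, -, hp⟩, hb⟩, -⟩, hend⟩
    rw [validFrom_signedBlock_iff rfl hp] at hb
    obtain ⟨hpos, hneg, -⟩ := hb
    exact ⟨hp, fun hu => by simpa using hpos hu, fun hu => by simpa using hneg hu, hend.symm⟩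
  · rintro ⟨hp, hpos, hneg, rfl⟩
    have hq : IsDomain m n (d1.1 - s, d1.2 + s + u) := by
      obtain ⟨-, -, h3, h4⟩ := hd2
      obtain ⟨h1, h2, -, -⟩ := hp
      exact ⟨h1, h2, h3, h4⟩
    refine ⟨⟨⟨⟨by simp, by simp, hp⟩, (validFrom_signedBlock_iff rfl hp u).2 ⟨?_, ?_, ?_⟩⟩,
      (validFrom_signedBlock_iff rfl hq c).2 ⟨by simp, by simp, ?_⟩⟩, rfl⟩
    · simpa using hpos
    · simpa using hneg
    · rwa [side]
    · convert hd2 using 1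
      ext <;> simp [WStep.disp]

theorem normalDecomp_iff {d2 d1 : ℤ × ℤ} (hd2 : IsDomain m n d2) (hd1 : IsDomain m n d1)
    (ws : List WStep) :
    NormalDecomp m n d2 d1 ws ↔ ∃ s u c, ws = normalWord s u c ∧ NormalParams m n d2 d1 s u c := by
  constructor
  · intro h
    obtain ⟨i, j, k, sT, bT, cT, hs, hb, hc, rfl⟩ := h.1
    obtain ⟨s, hs⟩ := exists_signedBlock_eq_replicate (neg := .spm) (pos := .smp) hs i
    obtain ⟨u, hb⟩ := exists_signedBlock_eq_replicate (neg := .tm) (pos := .bp) hb.symm j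
    obtain ⟨c, hc⟩ := exists_signedBlock_eq_replicate (neg := .cm) (pos := .cp) hc k
    have hws : List.replicate i sT ++ List.replicate j bT ++ List.replicate k cT =
        normalWord s u c := by rw [hs, hb, hc, normalWord]
    exact ⟨s, u, c, hws, (normalDecomp_normalWord_iff hd2 hd1 s u c).1 (hws ▸ h)⟩
  · rintro ⟨s, u, c, rfl, h⟩
    exact (normalDecomp_normalWord_iff hd2 hd1 s u c).2 h

theorem NormalParams.unique {d2 d1 : ℤ × ℤ} {s u c s' u' c' : ℤ}
    (h : NormalParams m n d2 d1 s u c) (h' : NormalParams m n d2 d1 s' u' c') :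
    s = s' ∧ u = u' ∧ c = c' := by
  obtain ⟨⟨hp1, hp2, -, -⟩, hpos, hneg, hend⟩ := h
  obtain ⟨⟨hp1', hp2', -, -⟩, hpos', hneg', hend'⟩ := h'
  rw [hend, Prod.mk.injEq] at hend'
  omega

theorem explicitWS_eq_normalWord {d2 d1 : ℤ × ℤ} (hd2 : IsDomain m n d2)
    (hd1 : IsDomain m n d1) :
    ∃ s u c, explicitWS m n d2 d1 = normalWord s u c ∧ NormalParams m n d2 d1 s u c := by
  obtain ⟨x2, y2⟩ := d2
  obtain ⟨x1, y1⟩ := d1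
  simp only [IsDomain] at hd2 hd1
  simp only [explicitWS, NormalParams, IsDomain, Prod.mk.injEq]
  split_ifs
  · refine ⟨x1.toNat, (y2 - y1 - x1).toNat, x2.toNat, ?_, by omega⟩
    simp [normalWord, -Int.ofNat_toNat]
  · refine ⟨(y2 - y1).toNat, 0, (x2 + y2 - x1 - y1).toNat, ?_, by omega⟩
    simp [normalWord, -Int.ofNat_toNat]
  · refine ⟨-(y1 - y2).toNat, 0, (x2 + y2 - x1 - y1).toNat, ?_, by omega⟩
    simp [normalWord, -Int.ofNat_toNat]
  · refine ⟨(y2 - y1).toNat, 0, -(x1 + y1 - x2 - y2).toNat, ?_, by omega⟩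
    simp [normalWord, -Int.ofNat_toNat]
  · refine ⟨-(y1 - y2).toNat, 0, -(x1 + y1 - x2 - y2).toNat, ?_, by omega⟩
    simp [normalWord, -Int.ofNat_toNat]
  · refine ⟨-(m - n - x1).toNat, -(x1 + y1 - y2 - (m - n)).toNat, -(m - n - x2).toNat, ?_, ?_⟩
    · simp [normalWord, -Int.ofNat_toNat]
    · omega

end NormalDecompositions

theorem stmt14_general (m n : ℤ)
    (d2 d1 : ℤ × ℤ) (hd2 : IsDomain m n d2) (hd1 : IsDomain m n d1) :
    (∃! ws : List WStep, NormalDecomp m n d2 d1 ws) ∧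
    NormalDecomp m n d2 d1 (explicitWS m n d2 d1) := by
  obtain ⟨s, u, c, hexplicit, hparams⟩ := explicitWS_eq_normalWord hd2 hd1
  have hnormal : NormalDecomp m n d2 d1 (explicitWS m n d2 d1) :=
    (normalDecomp_iff hd2 hd1 _).2 ⟨s, u, c, hexplicit, hparams⟩
  refine ⟨⟨_, hnormal, fun ws hws => ?_⟩, hnormal⟩
  obtain ⟨s', u', c', rfl, hparams'⟩ := (normalDecomp_iff hd2 hd1 ws).1 hws
  obtain ⟨rfl, rfl, rfl⟩ := hparams'.unique hparams
  exact hexplicit.symm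

theorem stmt14 (m n : ℤ) (hmn : n < m) (hn : 1 ≤ n)
    (d2 d1 : ℤ × ℤ) (hd2 : IsDomain m n d2) (hd1 : IsDomain m n d1) (hne : d2 ≠ d1) :
    (∃! ws : List WStep, NormalDecomp m n d2 d1 ws) ∧
    NormalDecomp m n d2 d1 (explicitWS m n d2 d1) :=
  stmt14_general m n d2 d1 hd2 hd1

end Stmt14
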